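/- Suppose for each customer j in a finite set W, exactly one variable x_{i,s,j,t} with target j equals 1, and for each vertex (i,s), the number of 1-valued variables entering (i,s) equals the number leaving (i,s). If additionally every 1-valued variable satisfies s < t, then the set of 1-valued variables, viewed as edges of a directed multigraph, decomposes into vertex-disjoint directed paths each starting at the origin depot 0 and ending at the final depot N, and these paths jointly visit every customer in W exactly once. -/

import Mathlib

/-!
Away from the depots, coverage and flow conservation force every vertex to have in-degree equal to
out-degree and at most one. Following the unique successors from an edge leaving depot 0 therefore
gives a walk that cannot stop before depot N, and it is a path because time strictly increases
along it. Every edge lies on such a path: walk back along the unique predecessors until depot 0.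
Two of these paths meeting at a customer vertex have the same first edge for the same reason, so
they coincide.
-/

/-- Node labels: `Sum.inl (Sum.inl ())` is the origin depot 0,
`Sum.inl (Sum.inr j)` is customer j ∈ W, and `Sum.inr ()` is the final depot N. -/
abbrev RouteNode (W : Type*) := Sum (Sum Unit W) Unit

open Finset

namespace List

variable {α β : Type*} {R : α → α → Prop} {l : List α} {a : α}

theorem exists_append_cons_cons_of_mem_of_head?_ne (ha : a ∈ l) (hhead : l.head? ≠ some a) :
    ∃ l₁ b l₂, l = l₁ ++ b :: a :: l₂ := by
  obtain ⟨s, t, rfl⟩ := append_of_mem ha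
  rcases eq_nil_or_concat' s with rfl | ⟨s, b, rfl⟩
  · simp at hhead
  · exact ⟨s, b, t, by simp⟩

theorem exists_append_cons_cons_of_mem_of_getLast?_ne (ha : a ∈ l)
    (hlast : l.getLast? ≠ some a) : ∃ l₁ b l₂, l = l₁ ++ a :: b :: l₂ := by
  obtain ⟨s, t, rfl⟩ := append_of_mem ha
  cases t with
  | nil => simp at hlast
  | cons b t => exact ⟨s, b, t, rfl⟩

theorem IsChain.nodup_of_lt_comp [Preorder β] {f : α → β}
    (h : l.IsChain fun a b => f a < f b) : l.Nodup :=
  (isChain_iff_pairwise.1 ((isChain_map f).2 h)).nodup.of_map f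

end List

structure IsUnitFlow {V α : Type*} [Fintype V] [Preorder α] (E : V → V → Prop) [DecidableRel E]
    (src snk : V → Prop) (r : V → α) : Prop where
  rank_lt : ∀ u v, E u v → r u < r v
  not_src : ∀ u v, E u v → ¬ src v
  not_snk : ∀ u v, E u v → ¬ snk u
  card_in_eq_card_out : ∀ v, ¬ src v → ¬ snk v → #{u | E u v} = #{w | E v w}
  card_in_le_one : ∀ v, ¬ src v → ¬ snk v → #{u | E u v} ≤ 1

namespace IsUnitFlow

variable {V α : Type*} [Fintype V] [Preorder α] {E : V → V → Prop} [DecidableRel E]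
  {src snk : V → Prop} {r : V → α} {u u' v v' : V}

theorem left_unique (hG : IsUnitFlow E src snk r) (huv : E u v) (hu'v : E u' v) (hv : ¬ snk v) :
    u = u' :=
  card_le_one.1 (hG.card_in_le_one v (hG.not_src u v huv) hv) u (by simpa) u' (by simpa)

theorem right_unique (hG : IsUnitFlow E src snk r) (huv : E u v) (huv' : E u v') (hu : ¬ src u) :
    v = v' := by
  have hout := hG.card_in_le_one u hu (hG.not_snk u v huv)
  rw [hG.card_in_eq_card_out u hu (hG.not_snk u v huv)] at hout
  exact card_le_one.1 hout v (by simpa) v' (by simpa)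

theorem exists_succ (hG : IsUnitFlow E src snk r) (huv : E u v) (hv : ¬ snk v) : ∃ w, E v w := by
  have hin : 0 < #{u | E u v} := card_pos.2 ⟨u, by simpa⟩
  rw [hG.card_in_eq_card_out v (hG.not_src u v huv) hv] at hin
  obtain ⟨w, hw⟩ := card_pos.1 hin
  exact ⟨w, by simpa using hw⟩

theorem exists_pred (hG : IsUnitFlow E src snk r) (huv : E u v) (hu : ¬ src u) : ∃ t, E t u := by
  have hout : 0 < #{w | E u w} := card_pos.2 ⟨v, by simpa⟩
  rw [← hG.card_in_eq_card_out u hu (hG.not_snk u v huv)] at hout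
  obtain ⟨t, ht⟩ := card_pos.1 hout
  exact ⟨t, by simpa using ht⟩

theorem exists_isChain_to_snk (hG : IsUnitFlow E src snk r) (huv : E u v) :
    ∃ l, (v :: l).IsChain E ∧ ∃ w, (v :: l).getLast? = some w ∧ snk w := by
  induction v using (InvImage.wf (Set.rangeFactorization r) wellFounded_gt).induction
    generalizing u with
  | _ v ih =>
    by_cases hv : snk v
    · exact ⟨[], .singleton v, v, rfl, hv⟩
    obtain ⟨w, hvw⟩ := hG.exists_succ huv hv
    obtain ⟨l, hl, hlast⟩ := ih w (hG.rank_lt v w hvw) hvw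
    exact ⟨w :: l, hl.cons_cons hvw, by rwa [List.getLast?_cons_cons]⟩

section Paths

abbrev SourceEdge (E : V → V → Prop) (src : V → Prop) := {e : V × V // E e.1 e.2 ∧ src e.1}

noncomputable def path (hG : IsUnitFlow E src snk r) (e : SourceEdge E src) : List V :=
  e.1.1 :: e.1.2 :: (hG.exists_isChain_to_snk e.2.1).choose

variable (hG : IsUnitFlow E src snk r) (e : SourceEdge E src)

theorem isChain_path : (hG.path e).IsChain E :=
  (hG.exists_isChain_to_snk e.2.1).choose_spec.1.cons_cons e.2.1

theorem head?_path : (hG.path e).head? = some e.1.1 := rfl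

theorem exists_getLast?_path : ∃ w, (hG.path e).getLast? = some w ∧ snk w := by
  rw [path, List.getLast?_cons_cons]
  exact (hG.exists_isChain_to_snk e.2.1).choose_spec.2

theorem nodup_path : (hG.path e).Nodup :=
  ((hG.isChain_path e).imp hG.rank_lt).nodup_of_lt_comp

variable {e} {e' : SourceEdge E src} {l₁ l₂ : List V}

theorem rel_of_path_eq (h : hG.path e = l₁ ++ u :: v :: l₂) : E u v :=
  List.isChain_iff_forall_rel_of_append_cons_cons.1 (hG.isChain_path e) h

theorem val_eq_of_path_eq_of_src (h : hG.path e = l₁ ++ u :: v :: l₂) (hu : src u) :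
    e.1 = (u, v) := by
  obtain rfl : l₁ = [] := by
    by_contra hne
    have hchain := hG.isChain_path e
    rw [h] at hchain
    exact hG.not_src _ u (hchain.rel_getLast_head_of_append hne (List.cons_ne_nil _ _)) hu
  simp only [path, List.nil_append, List.cons.injEq] at h
  exact Prod.ext h.1 h.2.1

theorem exists_path_eq_of_not_src (hv : v ∈ hG.path e) (hsrc : ¬ src v) :
    ∃ l₁ u l₂, hG.path e = l₁ ++ u :: v :: l₂ := by
  refine List.exists_append_cons_cons_of_mem_of_head?_ne hv ?_
  rw [head?_path, ne_eq, Option.some_inj]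
  rintro rfl
  exact hsrc e.2.2

theorem exists_path_eq_of_not_snk (hv : v ∈ hG.path e) (hsnk : ¬ snk v) :
    ∃ l₁ w l₂, hG.path e = l₁ ++ v :: w :: l₂ := by
  refine List.exists_append_cons_cons_of_mem_of_getLast?_ne hv ?_
  obtain ⟨w, hw, hw_snk⟩ := hG.exists_getLast?_path e
  rw [hw, ne_eq, Option.some_inj]
  rintro rfl
  exact hsnk hw_snk

theorem exists_path_eq_of_rel (huv : E u v) : ∃ e l₁ l₂, hG.path e = l₁ ++ u :: v :: l₂ := by
  induction u using (InvImage.wf (Set.rangeFactorization r) wellFounded_lt).induction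
    generalizing v with
  | _ u ih =>
    by_cases hu : src u
    · exact ⟨⟨(u, v), huv, hu⟩, [], _, rfl⟩
    obtain ⟨t, htu⟩ := hG.exists_pred huv hu
    obtain ⟨e, l₁, l₂, hl⟩ := ih t (hG.rank_lt t u htu) htu
    have hu_mem : u ∈ hG.path e := by simp [hl]
    obtain ⟨m₁, w, m₂, hm⟩ := hG.exists_path_eq_of_not_snk hu_mem (hG.not_snk u v huv)
    obtain rfl := hG.right_unique (hG.rel_of_path_eq hm) huv hu
    exact ⟨e, m₁, m₂, hm⟩

theorem eq_of_mem_path (hv : v ∈ hG.path e) (hv' : v ∈ hG.path e') (hsrc : ¬ src v)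
    (hsnk : ¬ snk v) : e = e' := by
  induction v using (InvImage.wf (Set.rangeFactorization r) wellFounded_lt).induction with
  | _ v ih =>
    obtain ⟨l₁, u, l₂, hl⟩ := hG.exists_path_eq_of_not_src hv hsrc
    obtain ⟨l₁', u', l₂', hl'⟩ := hG.exists_path_eq_of_not_src hv' hsrc
    have huv := hG.rel_of_path_eq hl
    obtain rfl := hG.left_unique huv (hG.rel_of_path_eq hl') hsnk
    by_cases hu : src u
    · exact Subtype.ext <|
        (hG.val_eq_of_path_eq_of_src hl hu).trans (hG.val_eq_of_path_eq_of_src hl' hu).symm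
    · exact ih u (hG.rank_lt u v huv) (by simp [hl]) (by simp [hl']) hu (hG.not_snk u v huv)

end Paths

theorem exists_path_decomposition (hG : IsUnitFlow E src snk r) :
    ∃ (k : ℕ) (P : Fin k → List V),
      (∀ a, (P a).Nodup) ∧
      (∀ a, (P a).IsChain E) ∧
      (∀ a, ∃ v, (P a).head? = some v ∧ src v) ∧
      (∀ a, ∃ v, (P a).getLast? = some v ∧ snk v) ∧
      (∀ a b, a ≠ b → ∀ v, v ∈ P a → v ∈ P b → src v ∨ snk v) ∧
      (∀ u v, E u v ↔ ∃ a l₁ l₂, P a = l₁ ++ u :: v :: l₂) := by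
  let e := (Finite.equivFin (SourceEdge E src)).symm
  refine ⟨_, hG.path ∘ e, fun a => hG.nodup_path _, fun a => hG.isChain_path _,
    fun a => ⟨_, hG.head?_path _, (e a).2.2⟩, fun a => hG.exists_getLast?_path _, ?_,
    fun u v => ⟨fun huv => ?_, fun ⟨a, l₁, l₂, h⟩ => hG.rel_of_path_eq h⟩⟩
  · intro a b hab v ha hb
    by_contra! h
    exact hab (e.injective (hG.eq_of_mem_path ha hb h.1 h.2))
  · obtain ⟨e', l₁, l₂, h⟩ := hG.exists_path_eq_of_rel huv
    exact ⟨e.symm e', l₁, l₂, by simpa using h⟩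

end IsUnitFlow

theorem setOf_and_mem_paths_eq_singleton {ι V : Type*} {E : V → V → Prop} {src C : V → Prop}
    {P : ι → List V} (hhead : ∀ a, ∃ v, (P a).head? = some v ∧ src v)
    (hedge : ∀ u v, E u v ↔ ∃ a l₁ l₂, P a = l₁ ++ u :: v :: l₂) (hC : ∀ v, C v → ¬ src v)
    {p q : V} (hpq : E p q) (huniq : ∀ u v, E u v → C v → v = q) (hq : C q) :
    {v | C v ∧ ∃ a, v ∈ P a} = {q} := by
  obtain ⟨a, l₁, l₂, h⟩ := (hedge p q).1 hpq
  refine Set.eq_singleton_iff_unique_mem.2 ⟨⟨hq, a, by simp [h]⟩, ?_⟩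
  rintro v ⟨hv, a, hva⟩
  obtain ⟨w, hw, hw_src⟩ := hhead a
  obtain ⟨l₁, u, l₂, h⟩ := List.exists_append_cons_cons_of_mem_of_head?_ne hva <| by
    rw [hw, ne_eq, Option.some_inj]
    rintro rfl
    exact hC w hv hw_src
  exact huniq u v ((hedge u v).2 ⟨a, l₁, l₂, h⟩) hv

/-- If for each customer j exactly one 1-valued variable targets j
(coverage), flow is conserved at every customer vertex (i,s), no edge enters
depot 0, no edge leaves depot N, and every 1-valued variable goes strictly
forward in time, then the 1-valued variables decompose into directed paths,
each from depot 0 to depot N, pairwise sharing no vertex except possibly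
depot-labeled ones, and jointly visiting every customer exactly once. -/
theorem ones_decompose_into_paths
    {W : Type*} [Fintype W] [DecidableEq W] (T : ℕ)
    (x : (RouteNode W × Fin T) → (RouteNode W × Fin T) → Bool)
    (hcover : ∀ j : W,
      (Finset.univ.filter
        (fun p : (RouteNode W × Fin T) × (RouteNode W × Fin T) =>
          x p.1 p.2 = true ∧ p.2.1 = Sum.inl (Sum.inr j))).card = 1)
    (hflow : ∀ (j : W) (s : Fin T),
      (Finset.univ.filter
        (fun u : RouteNode W × Fin T =>
          x u (Sum.inl (Sum.inr j), s) = true)).card =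
      (Finset.univ.filter
        (fun u : RouteNode W × Fin T =>
          x (Sum.inl (Sum.inr j), s) u = true)).card)
    (htime : ∀ u v, x u v = true → u.2 < v.2)
    (hnoenter0 : ∀ u v, x u v = true → v.1 ≠ Sum.inl (Sum.inl ()))
    (hnoleaveN : ∀ u v, x u v = true → u.1 ≠ Sum.inr ()) :
    ∃ (k : ℕ) (P : Fin k → List (RouteNode W × Fin T)),
      (∀ a, (P a).Nodup) ∧
      (∀ a, (P a).Chain' (fun u v => x u v = true)) ∧
      (∀ a, ∃ v, (P a).head? = some v ∧ v.1 = Sum.inl (Sum.inl ())) ∧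
      (∀ a, ∃ v, (P a).getLast? = some v ∧ v.1 = Sum.inr ()) ∧
      (∀ a b, a ≠ b → ∀ v : RouteNode W × Fin T, v ∈ P a → v ∈ P b →
        v.1 = Sum.inl (Sum.inl ()) ∨ v.1 = Sum.inr ()) ∧
      (∀ u v, x u v = true ↔
        ∃ (a : Fin k) (l₁ l₂ : List (RouteNode W × Fin T)), P a = l₁ ++ u :: v :: l₂) ∧
      (∀ j : W,
        ({v : RouteNode W × Fin T |
            v.1 = Sum.inl (Sum.inr j) ∧ ∃ a, v ∈ P a}).ncard = 1) := by
  have hG : IsUnitFlow (fun u v => x u v = true) (fun v => v.1 = Sum.inl (Sum.inl ()))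
      (fun v => v.1 = Sum.inr ()) Prod.snd :=
    { rank_lt := htime
      not_src := hnoenter0
      not_snk := hnoleaveN
      card_in_eq_card_out := by
        rintro ⟨(⟨⟩ | j) | ⟨⟩, s⟩ h0 hN
        exacts [absurd rfl h0, hflow j s, absurd rfl hN]
      card_in_le_one := by
        rintro ⟨(⟨⟩ | j) | ⟨⟩, s⟩ h0 hN
        · exact absurd rfl h0
        · exact (card_le_card_of_injOn (fun u => (u, (Sum.inl (Sum.inr j), s)))
            (fun u hu => by simpa using hu) fun _ _ _ _ h => congrArg Prod.fst h).trans
            (hcover j).le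
        · exact absurd rfl hN }
  obtain ⟨k, P, hnodup, hchain, hhead, hlast, hdisj, hedge⟩ := hG.exists_path_decomposition
  refine ⟨k, P, hnodup, hchain, hhead, hlast, hdisj, hedge, fun j => ?_⟩
  obtain ⟨⟨p, q⟩, hpq⟩ := card_eq_one.1 (hcover j)
  obtain ⟨hpq_mem, hpq_uniq⟩ := eq_singleton_iff_unique_mem.1 hpq
  simp only [mem_filter, mem_univ, true_and] at hpq_mem hpq_uniq
  rw [setOf_and_mem_paths_eq_singleton (C := fun v => v.1 = Sum.inl (Sum.inr j)) hhead hedge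
    (fun v hv h0 => by simp [hv] at h0) hpq_mem.1
    (fun u v huv hv => congrArg Prod.snd (hpq_uniq (u, v) ⟨huv, hv⟩)) hpq_mem.2,
    Set.ncard_singleton]
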